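/- Fix real numbers u1 < u2 and s1, s2 ∈ ℝ. For t > 0 define integers x_i(t) = ⌊−2 u_i t^{2/3} − s_i t^{1/3}⌋ and n_i(t) = ⌊t/4 + u_i t^{2/3}⌋ for i = 1, 2. Then lim_{t→∞} t^{1/3} · binom(x1(t) − x2(t) − 1, n2(t) − n1(t) − 1) · 2^{x2(t) − x1(t)} = (1/√(4π(u2−u1))) · exp(−(s2−s1)²/(4(u2−u1))). (Here, for all t large enough, x1(t) − x2(t) − 1 ≥ n2(t) − n1(t) − 1 ≥ 0, so the binomial coefficient is the usual one on natural numbers.) -/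

import Mathlib

open Filter

/-- The rescaled particle position `x(u,s,t) = ⌊-2u·t^{2/3} - s·t^{1/3}⌋`. -/
noncomputable def xPos (u s t : ℝ) : ℤ :=
  ⌊-2 * u * t ^ ((2 : ℝ) / 3) - s * t ^ ((1 : ℝ) / 3)⌋

/-- The rescaled particle label `n(u,t) = ⌊t/4 + u·t^{2/3}⌋`. -/
noncomputable def nLab (u t : ℝ) : ℤ :=
  ⌊t / 4 + u * t ^ ((2 : ℝ) / 3)⌋

/-!
Put `σ = t^{1/3}`, `m = x₁ - x₂ - 1` and `k = n₂ - n₁ - 1`. Up to bounded floor errors,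
`m ≈ 2(u₂-u₁)σ² + (s₂-s₁)σ` and `k ≈ (u₂-u₁)σ²`, so the claim is a local de Moivre–Laplace
theorem on the diffusive scale `m ~ cσ²`, `2k - m ~ dσ`. By Stirling's formula, `C(m,k)/2^m` is
a correction factor tending to `1/√π`, times `√(m/(2k(m-k)))`, times `exp(-m(log 2 - H(k/m)))`
with `H` the binary entropy. Since `log 2 - H(1/2 + y) = 2y² + O(|y|³)`, the exponent tends to
`-d²/(2c)`, while `σ√(m/(2k(m-k))) → √(2/c)`.
-/

open Real Topology Stirling
open scoped Nat

lemma exp_mul_binEntropy_div {k m : ℕ} (hk : 0 < k) (hkm : k < m) :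
    exp (m * binEntropy (k / m)) = (m : ℝ) ^ m / ((k : ℝ) ^ k * ((m : ℝ) - k) ^ (m - k)) := by
  have hk' : (0 : ℝ) < k := by exact_mod_cast hk
  have hmk : (0 : ℝ) < (m : ℝ) - k := sub_pos.mpr (by exact_mod_cast hkm)
  have hm : (0 : ℝ) < m := hk'.trans (by exact_mod_cast hkm)
  rw [← exp_log (by positivity : (0 : ℝ) < (m : ℝ) ^ m / ((k : ℝ) ^ k * ((m : ℝ) - k) ^ (m - k))),
    log_div (by positivity) (by positivity), log_mul (by positivity) (by positivity),
    Real.log_pow, Real.log_pow, Real.log_pow, Nat.cast_sub hkm.le,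
    binEntropy_eq_negMulLog_add_negMulLog_one_sub, negMulLog, negMulLog,
    one_sub_div hm.ne', log_div hk'.ne' hm.ne', log_div hmk.ne' hm.ne']
  field_simp
  congr 1
  ring

lemma stirlingSeq_pos {n : ℕ} (hn : n ≠ 0) : 0 < stirlingSeq n :=
  (sqrt_pos.2 pi_pos).trans_le (sqrt_pi_le_stirlingSeq hn)

lemma factorial_eq_stirlingSeq_mul {n : ℕ} (hn : n ≠ 0) :
    (n ! : ℝ) = stirlingSeq n * (√(2 * n) * (n / exp 1) ^ n) := by
  rw [stirlingSeq, div_mul_cancel₀]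
  positivity

lemma choose_div_two_pow_eq {k m : ℕ} (hk : 0 < k) (hkm : k < m) :
    (m.choose k : ℝ) / 2 ^ m = stirlingSeq m / (stirlingSeq k * stirlingSeq (m - k)) *
      √(m / (2 * k * ((m : ℝ) - k))) * exp (-(m * (log 2 - binEntropy (k / m)))) := by
  have hk' : (0 : ℝ) < k := by exact_mod_cast hk
  have hmk : (0 : ℝ) < (m : ℝ) - k := sub_pos.mpr (by exact_mod_cast hkm)
  have hsqrt : √(m / (2 * k * ((m : ℝ) - k))) = √(2 * m) / (√(2 * k) * √(2 * ((m : ℝ) - k))) := by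
    rw [← sqrt_mul (by positivity), ← sqrt_div' _ (by positivity)]
    congr 1
    field_simp
  have hexp : exp (-(m * (log 2 - binEntropy (k / m)))) =
      exp (m * binEntropy (k / m)) / 2 ^ m := by
    rw [mul_sub, neg_sub, exp_sub, ← rpow_natCast, rpow_def_of_pos two_pos, mul_comm (log 2)]
  have he : exp 1 ^ m = exp 1 ^ k * exp 1 ^ (m - k) := by
    rw [← pow_add, Nat.add_sub_cancel' hkm.le]
  have hsm := stirlingSeq_pos (n := m) (by omega)
  have hsk := stirlingSeq_pos hk.ne'
  have hsmk := stirlingSeq_pos (n := m - k) (by omega)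
  rw [Nat.cast_choose ℝ hkm.le, factorial_eq_stirlingSeq_mul (by omega),
    factorial_eq_stirlingSeq_mul hk.ne', factorial_eq_stirlingSeq_mul (by omega),
    hsqrt, hexp, exp_mul_binEntropy_div hk hkm, div_pow, div_pow, div_pow, he,
    Nat.cast_sub hkm.le]
  field_simp

lemma abs_log_one_sub_add_le {x : ℝ} (hx : |x| ≤ 1 / 2) :
    |log (1 - x) + x + x ^ 2 / 2| ≤ 2 * |x| ^ 3 := by
  have h := abs_log_sub_add_sum_range_le (hx.trans_lt (by norm_num)) 2
  norm_num [Finset.sum_range_succ] at h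
  calc |log (1 - x) + x + x ^ 2 / 2| = |x + x ^ 2 / 2 + log (1 - x)| := by ring_nf
    _ ≤ |x| ^ 3 / (1 - |x|) := h
    _ ≤ 2 * |x| ^ 3 := by
      rw [div_le_iff₀ (by linarith)]
      nlinarith [pow_nonneg (abs_nonneg x) 3]

lemma abs_log_two_sub_binEntropy_sub_le {y : ℝ} (hy : |y| ≤ 1 / 4) :
    |log 2 - binEntropy (2⁻¹ + y) - 2 * y ^ 2| ≤ 16 * |y| ^ 3 := by
  have hy' := abs_le.mp hy
  have e1 : |log (1 + 2 * y) - (2 * y - 2 * y ^ 2)| ≤ 16 * |y| ^ 3 := by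
    have h := abs_log_one_sub_add_le (x := -(2 * y)) (by rw [abs_neg, abs_mul, abs_two]; linarith)
    rw [abs_neg, abs_mul, abs_two] at h
    convert h using 1 <;> ring_nf
  have e2 : |log (1 - 2 * y) - (-(2 * y) - 2 * y ^ 2)| ≤ 16 * |y| ^ 3 := by
    have h := abs_log_one_sub_add_le (x := 2 * y) (by rw [abs_mul, abs_two]; linarith)
    rw [abs_mul, abs_two] at h
    convert h using 1 <;> ring_nf
  have key : log 2 - binEntropy (2⁻¹ + y) - 2 * y ^ 2 =
      (2⁻¹ + y) * (log (1 + 2 * y) - (2 * y - 2 * y ^ 2)) +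
        (2⁻¹ - y) * (log (1 - 2 * y) - (-(2 * y) - 2 * y ^ 2)) := by
    rw [binEntropy_eq_negMulLog_add_negMulLog_one_sub, negMulLog, negMulLog,
      show (2⁻¹ + y) = (1 + 2 * y) / 2 by ring, show 1 - (1 + 2 * y) / 2 = (1 - 2 * y) / 2 by ring,
      log_div (by linarith) two_ne_zero, log_div (by linarith) two_ne_zero]
    ring
  rw [key]
  calc _ ≤ |(2⁻¹ + y) * (log (1 + 2 * y) - (2 * y - 2 * y ^ 2))| +
        |(2⁻¹ - y) * (log (1 - 2 * y) - (-(2 * y) - 2 * y ^ 2))| := abs_add_le _ _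
    _ ≤ (2⁻¹ + y) * (16 * |y| ^ 3) + (2⁻¹ - y) * (16 * |y| ^ 3) := by
      rw [abs_mul, abs_mul, abs_of_nonneg (by linarith : (0 : ℝ) ≤ 2⁻¹ + y),
        abs_of_nonneg (by linarith : (0 : ℝ) ≤ 2⁻¹ - y)]
      gcongr <;> linarith
    _ = 16 * |y| ^ 3 := by ring

section Asymptotics

variable {α : Type*} {l : Filter α} {σ : α → ℝ} {c d : ℝ}

lemma tendsto_mul_log_two_sub_binEntropy {m y : α → ℝ} {L : ℝ} (hy : Tendsto y l (𝓝 0))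
    (hmy : Tendsto (fun i => m i * y i ^ 2) l (𝓝 L)) :
    Tendsto (fun i => m i * (log 2 - binEntropy (2⁻¹ + y i))) l (𝓝 (2 * L)) := by
  have habs : Tendsto (fun i => |y i|) l (𝓝 0) := by simpa using hy.abs
  have hbound : Tendsto (fun i => 16 * |m i * y i ^ 2| * |y i|) l (𝓝 0) := by
    simpa using (hmy.abs.const_mul 16).mul habs
  have herr : Tendsto (fun i => m i * (log 2 - binEntropy (2⁻¹ + y i) - 2 * y i ^ 2)) l (𝓝 0) := by
    refine squeeze_zero_norm' ?_ hbound
    filter_upwards [habs.eventually_le_const (by norm_num : (0 : ℝ) < 1 / 4)] with i hi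
    rw [norm_mul, norm_eq_abs, norm_eq_abs, abs_mul (m i), abs_pow, sq_abs]
    calc |m i| * |log 2 - binEntropy (2⁻¹ + y i) - 2 * y i ^ 2| ≤ |m i| * (16 * |y i| ^ 3) := by
          gcongr; exact abs_log_two_sub_binEntropy_sub_le hi
      _ = 16 * (|m i| * y i ^ 2) * |y i| := by rw [← sq_abs (y i)]; ring
  have h := (hmy.const_mul 2).add herr
  rw [add_zero] at h
  exact h.congr fun i => by ring

lemma tendsto_div_of_abs_sub_mul_le {x : α → ℝ} {L C : ℝ} (hσ : Tendsto σ l atTop)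
    (h : ∀ᶠ i in l, |x i - L * σ i| ≤ C) : Tendsto (fun i => x i / σ i) l (𝓝 L) := by
  have h0 : Tendsto (fun i => (x i - L * σ i) / σ i) l (𝓝 0) := by
    refine squeeze_zero_norm' ?_ ((tendsto_const_nhds (x := C)).div_atTop hσ)
    filter_upwards [h, hσ.eventually_gt_atTop 0] with i hi hσi
    rw [norm_div, norm_eq_abs, norm_eq_abs, abs_of_pos hσi]
    gcongr
  have h1 := h0.add_const L
  rw [zero_add] at h1
  refine h1.congr' ?_
  filter_upwards [hσ.eventually_gt_atTop 0] with i hi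
  field_simp
  ring

lemma tendsto_atTop_of_tendsto_div_sq {x : α → ℝ} (hσ : Tendsto σ l atTop) (hc : 0 < c)
    (hx : Tendsto (fun i => x i / σ i ^ 2) l (𝓝 c)) : Tendsto x l atTop := by
  refine (hx.pos_mul_atTop hc ((tendsto_pow_atTop two_ne_zero).comp hσ)).congr' ?_
  filter_upwards [hσ.eventually_gt_atTop 0] with i hi
  simp only [Function.comp_apply]
  field_simp

section

variable {m k : α → ℝ}

lemma tendsto_div_sq_of_tendsto_sub_div (hσ : Tendsto σ l atTop)
    (hm : Tendsto (fun i => m i / σ i ^ 2) l (𝓝 c))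
    (hk : Tendsto (fun i => (2 * k i - m i) / σ i) l (𝓝 d)) :
    Tendsto (fun i => k i / σ i ^ 2) l (𝓝 (c / 2)) := by
  have h := (hm.add (hk.mul (tendsto_inv_atTop_zero.comp hσ))).div_const 2
  rw [mul_zero, add_zero] at h
  refine h.congr' ?_
  filter_upwards [hσ.eventually_gt_atTop 0] with i hi
  simp only [Function.comp_apply]
  field_simp
  ring

lemma tendsto_sub_div_sq_of_tendsto_sub_div (hσ : Tendsto σ l atTop)
    (hm : Tendsto (fun i => m i / σ i ^ 2) l (𝓝 c))
    (hk : Tendsto (fun i => (2 * k i - m i) / σ i) l (𝓝 d)) :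
    Tendsto (fun i => (m i - k i) / σ i ^ 2) l (𝓝 (c / 2)) := by
  have h := hm.sub (tendsto_div_sq_of_tendsto_sub_div hσ hm hk)
  rw [sub_half] at h
  exact h.congr fun i => (sub_div _ _ _).symm

lemma eventually_pos_lt_of_tendsto_sub_div (hσ : Tendsto σ l atTop) (hc : 0 < c)
    (hm : Tendsto (fun i => m i / σ i ^ 2) l (𝓝 c))
    (hk : Tendsto (fun i => (2 * k i - m i) / σ i) l (𝓝 d)) :
    ∀ᶠ i in l, 0 < k i ∧ k i < m i := by
  filter_upwards [(tendsto_atTop_of_tendsto_div_sq hσ (half_pos hc)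
      (tendsto_div_sq_of_tendsto_sub_div hσ hm hk)).eventually_gt_atTop 0,
    (tendsto_atTop_of_tendsto_div_sq hσ (half_pos hc)
      (tendsto_sub_div_sq_of_tendsto_sub_div hσ hm hk)).eventually_gt_atTop 0] with i hk0 hmk0
  exact ⟨hk0, sub_pos.mp hmk0⟩

lemma tendsto_mul_sqrt_div_mul_sub (hσ : Tendsto σ l atTop) (hc : 0 < c)
    (hm : Tendsto (fun i => m i / σ i ^ 2) l (𝓝 c))
    (hk : Tendsto (fun i => (2 * k i - m i) / σ i) l (𝓝 d)) :
    Tendsto (fun i => σ i * √(m i / (2 * k i * (m i - k i)))) l (𝓝 √(2 / c)) := by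
  have h := (hm.div ((tendsto_div_sq_of_tendsto_sub_div hσ hm hk).const_mul 2 |>.mul
    (tendsto_sub_div_sq_of_tendsto_sub_div hσ hm hk)) (by positivity)).sqrt
  rw [show c / (2 * (c / 2) * (c / 2)) = 2 / c by field_simp] at h
  refine h.congr' ?_
  filter_upwards [hσ.eventually_gt_atTop 0] with i hi
  simp only [Pi.div_apply]
  rw [show m i / σ i ^ 2 / (2 * (k i / σ i ^ 2) * ((m i - k i) / σ i ^ 2)) =
      σ i ^ 2 * (m i / (2 * k i * (m i - k i))) by field_simp,
    sqrt_mul (sq_nonneg _), sqrt_sq hi.le]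

lemma tendsto_mul_log_two_sub_binEntropy_div (hσ : Tendsto σ l atTop) (hc : 0 < c)
    (hm : Tendsto (fun i => m i / σ i ^ 2) l (𝓝 c))
    (hk : Tendsto (fun i => (2 * k i - m i) / σ i) l (𝓝 d)) :
    Tendsto (fun i => m i * (log 2 - binEntropy (k i / m i))) l (𝓝 (d ^ 2 / (2 * c))) := by
  have hpos := eventually_pos_lt_of_tendsto_sub_div hσ hc hm hk
  have hy : Tendsto (fun i => k i / m i - 2⁻¹) l (𝓝 0) := by
    have h := (hk.mul (tendsto_inv_atTop_zero.comp hσ)).div (hm.const_mul 2) (by positivity)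
    rw [mul_zero, zero_div] at h
    refine h.congr' ?_
    filter_upwards [hσ.eventually_gt_atTop 0, hpos] with i hi hki
    have hm0 : m i ≠ 0 := (hki.1.trans hki.2).ne'
    simp only [Pi.div_apply, Function.comp_apply]
    field_simp
  have hmy : Tendsto (fun i => m i * (k i / m i - 2⁻¹) ^ 2) l (𝓝 (d ^ 2 / (4 * c))) := by
    refine ((hk.pow 2).div (hm.const_mul 4) (by positivity)).congr' ?_
    filter_upwards [hσ.eventually_gt_atTop 0, hpos] with i hi hki
    have hm0 : m i ≠ 0 := (hki.1.trans hki.2).ne'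
    simp only [Pi.div_apply]
    field_simp
    ring
  have h := tendsto_mul_log_two_sub_binEntropy hy hmy
  rw [show 2 * (d ^ 2 / (4 * c)) = d ^ 2 / (2 * c) by ring] at h
  exact h.congr fun i => by rw [add_sub_cancel]

end

theorem tendsto_mul_choose_div_two_pow {m k : α → ℕ} (hσ : Tendsto σ l atTop) (hc : 0 < c)
    (hm : Tendsto (fun i => (m i : ℝ) / σ i ^ 2) l (𝓝 c))
    (hk : Tendsto (fun i => (2 * k i - m i : ℝ) / σ i) l (𝓝 d)) :
    Tendsto (fun i => σ i * (m i).choose (k i) / 2 ^ m i) l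
      (𝓝 (√(2 / (π * c)) * exp (-(d ^ 2 / (2 * c))))) := by
  have hk2 := tendsto_div_sq_of_tendsto_sub_div hσ hm hk
  have hmk2 := tendsto_sub_div_sq_of_tendsto_sub_div hσ hm hk
  have hpos : ∀ᶠ i in l, 0 < k i ∧ k i < m i :=
    (eventually_pos_lt_of_tendsto_sub_div hσ hc hm hk).mono fun i hi => by exact_mod_cast hi
  have hnat {n : α → ℕ} {x : α → ℝ} {a : ℝ} (ha : 0 < a)
      (hx : Tendsto (fun i => x i / σ i ^ 2) l (𝓝 a)) (hnx : ∀ᶠ i in l, (n i : ℝ) = x i) :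
      Tendsto n l atTop :=
    tendsto_natCast_atTop_iff.mp <|
      (tendsto_atTop_of_tendsto_div_sq hσ ha hx).congr' (hnx.mono fun _ h => h.symm)
  have hstirling : Tendsto (fun i => stirlingSeq (m i) / (stirlingSeq (k i) * stirlingSeq (m i - k i)))
      l (𝓝 (√π / (√π * √π))) := by
    refine (tendsto_stirlingSeq_sqrt_pi.comp ?_).div ((tendsto_stirlingSeq_sqrt_pi.comp ?_).mul
      (tendsto_stirlingSeq_sqrt_pi.comp ?_)) (by positivity)
    · exact hnat hc hm (Eventually.of_forall fun _ => rfl)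
    · exact hnat (half_pos hc) hk2 (Eventually.of_forall fun _ => rfl)
    · exact hnat (half_pos hc) hmk2 (hpos.mono fun i hi => Nat.cast_sub hi.2.le)
  have hsqrt := tendsto_mul_sqrt_div_mul_sub hσ hc hm hk
  have hexp := (tendsto_mul_log_two_sub_binEntropy_div hσ hc hm hk).neg.rexp
  have h := (hstirling.mul hsqrt).mul hexp
  rw [show √π / (√π * √π) * √(2 / c) = √(2 / (π * c)) by
    rw [show 2 / (π * c) = 2 / c / π by ring, sqrt_div' _ pi_pos.le]
    field_simp] at h
  refine h.congr' ?_
  filter_upwards [hpos] with i hi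
  rw [mul_div_assoc, choose_div_two_pow_eq hi.1 hi.2]
  ring

theorem tendsto_mul_choose_toNat_div_two_pow {m k : α → ℤ} (hσ : Tendsto σ l atTop) (hc : 0 < c)
    (hm : Tendsto (fun i => (m i : ℝ) / σ i ^ 2) l (𝓝 c))
    (hk : Tendsto (fun i => (2 * k i - m i : ℝ) / σ i) l (𝓝 d)) :
    (∀ᶠ i in l, 0 ≤ k i ∧ k i ≤ m i) ∧
      Tendsto (fun i => σ i * (m i).toNat.choose (k i).toNat / 2 ^ (m i).toNat) l
        (𝓝 (√(2 / (π * c)) * exp (-(d ^ 2 / (2 * c))))) := by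
  have hbounds : ∀ᶠ i in l, 0 ≤ k i ∧ k i ≤ m i :=
    (eventually_pos_lt_of_tendsto_sub_div hσ hc hm hk).mono fun i h =>
      ⟨by exact_mod_cast h.1.le, by exact_mod_cast h.2.le⟩
  have hcast : ∀ᶠ i in l, ((m i).toNat : ℝ) = m i ∧ ((k i).toNat : ℝ) = k i :=
    hbounds.mono fun i h => ⟨by exact_mod_cast Int.toNat_of_nonneg (h.1.trans h.2),
      by exact_mod_cast Int.toNat_of_nonneg h.1⟩
  exact ⟨hbounds, tendsto_mul_choose_div_two_pow hσ hc
    (hm.congr' (hcast.mono fun i h => by simp only [h.1]))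
    (hk.congr' (hcast.mono fun i h => by simp only [h.1, h.2]))⟩

end Asymptotics

lemma floor_sub_floor_sub_one_mem_Ioo (x y : ℝ) :
    ((⌊x⌋ - ⌊y⌋ - 1 : ℤ) : ℝ) ∈ Set.Ioo (x - y - 2) (x - y) := by
  have := Int.floor_le x
  have := Int.lt_floor_add_one x
  have := Int.floor_le y
  have := Int.lt_floor_add_one y
  push_cast
  constructor <;> linarith

lemma rpow_two_div_three {t : ℝ} (ht : 0 ≤ t) : t ^ ((2 : ℝ) / 3) = (t ^ ((1 : ℝ) / 3)) ^ 2 := by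
  rw [← rpow_natCast, ← rpow_mul ht]
  norm_num

section Scaling

variable (u1 u2 s1 s2 : ℝ)

lemma xPos_sub_xPos_sub_one_mem_Ioo {t : ℝ} (ht : 0 ≤ t) :
    ((xPos u1 s1 t - xPos u2 s2 t - 1 : ℤ) : ℝ) ∈ Set.Ioo
      (2 * (u2 - u1) * (t ^ ((1 : ℝ) / 3)) ^ 2 + (s2 - s1) * t ^ ((1 : ℝ) / 3) - 2)
      (2 * (u2 - u1) * (t ^ ((1 : ℝ) / 3)) ^ 2 + (s2 - s1) * t ^ ((1 : ℝ) / 3)) := by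
  rw [xPos, xPos, rpow_two_div_three ht]
  convert floor_sub_floor_sub_one_mem_Ioo _ _ using 2 <;> ring

lemma nLab_sub_nLab_sub_one_mem_Ioo {t : ℝ} (ht : 0 ≤ t) :
    ((nLab u2 t - nLab u1 t - 1 : ℤ) : ℝ) ∈ Set.Ioo
      ((u2 - u1) * (t ^ ((1 : ℝ) / 3)) ^ 2 - 2) ((u2 - u1) * (t ^ ((1 : ℝ) / 3)) ^ 2) := by
  rw [nLab, nLab, rpow_two_div_three ht]
  convert floor_sub_floor_sub_one_mem_Ioo _ _ using 2 <;> ring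

lemma tendsto_xPos_sub_xPos_sub_one_div_sq :
    Tendsto (fun t => ((xPos u1 s1 t - xPos u2 s2 t - 1 : ℤ) : ℝ) / (t ^ ((1 : ℝ) / 3)) ^ 2) atTop
      (𝓝 (2 * (u2 - u1))) := by
  have hσ : Tendsto (fun t : ℝ => t ^ ((1 : ℝ) / 3)) atTop atTop := tendsto_rpow_atTop (by norm_num)
  have h := tendsto_div_of_abs_sub_mul_le (C := 2) (L := s2 - s1) (x := fun t =>
      ((xPos u1 s1 t - xPos u2 s2 t - 1 : ℤ) : ℝ) - 2 * (u2 - u1) * (t ^ ((1 : ℝ) / 3)) ^ 2) hσ <| by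
    filter_upwards [eventually_ge_atTop 0] with t ht
    have hx := xPos_sub_xPos_sub_one_mem_Ioo u1 u2 s1 s2 ht
    exact abs_le.mpr ⟨by linarith [hx.1], by linarith [hx.2]⟩
  have h' := (h.mul (tendsto_inv_atTop_zero.comp hσ)).add_const (2 * (u2 - u1))
  rw [mul_zero, zero_add] at h'
  refine h'.congr' ?_
  filter_upwards [hσ.eventually_gt_atTop 0] with t ht
  simp only [Function.comp_apply]
  field_simp
  ring

lemma tendsto_two_mul_nLab_sub_xPos_div :
    Tendsto (fun t => (2 * ((nLab u2 t - nLab u1 t - 1 : ℤ) : ℝ) -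
      ((xPos u1 s1 t - xPos u2 s2 t - 1 : ℤ) : ℝ)) / t ^ ((1 : ℝ) / 3)) atTop
      (𝓝 (-(s2 - s1))) := by
  refine tendsto_div_of_abs_sub_mul_le (C := 4) (tendsto_rpow_atTop (by norm_num)) ?_
  filter_upwards [eventually_ge_atTop 0] with t ht
  have hx := xPos_sub_xPos_sub_one_mem_Ioo u1 u2 s1 s2 ht
  have hn := nLab_sub_nLab_sub_one_mem_Ioo u1 u2 ht
  exact abs_le.mpr ⟨by linarith [hx.1, hx.2, hn.1, hn.2], by linarith [hx.1, hx.2, hn.1, hn.2]⟩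

end Scaling

/-- For `u1 < u2` and `s1, s2 ∈ ℝ`, with `x_i(t) = ⌊-2 u_i t^{2/3} - s_i t^{1/3}⌋` and
`n_i(t) = ⌊t/4 + u_i t^{2/3}⌋`, one has, for all `t` large enough,
`x1(t) - x2(t) - 1 ≥ n2(t) - n1(t) - 1 ≥ 0`, and
`lim_{t→∞} t^{1/3} · binom(x1(t)-x2(t)-1, n2(t)-n1(t)-1) · 2^{x2(t)-x1(t)}
  = (1/√(4π(u2-u1))) · exp(-(s2-s1)²/(4(u2-u1)))`. -/
theorem statement1 (u1 u2 s1 s2 : ℝ) (hu : u1 < u2) :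
    (∀ᶠ t : ℝ in atTop,
        0 ≤ nLab u2 t - nLab u1 t - 1 ∧
          nLab u2 t - nLab u1 t - 1 ≤ xPos u1 s1 t - xPos u2 s2 t - 1) ∧
      Tendsto (fun t : ℝ =>
          t ^ ((1 : ℝ) / 3) *
            ((Nat.choose (xPos u1 s1 t - xPos u2 s2 t - 1).toNat
                (nLab u2 t - nLab u1 t - 1).toNat : ℝ)) *
              (2 : ℝ) ^ (xPos u2 s2 t - xPos u1 s1 t))
        atTop
        (nhds (1 / Real.sqrt (4 * Real.pi * (u2 - u1)) *
          Real.exp (-(s2 - s1) ^ 2 / (4 * (u2 - u1))))) := by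
  obtain ⟨hbounds, h⟩ := tendsto_mul_choose_toNat_div_two_pow
    (tendsto_rpow_atTop (by norm_num : (0 : ℝ) < 1 / 3)) (by linarith)
    (tendsto_xPos_sub_xPos_sub_one_div_sq u1 u2 s1 s2) (tendsto_two_mul_nLab_sub_xPos_div u1 u2 s1 s2)
  have hval : √(2 / (π * (2 * (u2 - u1)))) * exp (-((-(s2 - s1)) ^ 2 / (2 * (2 * (u2 - u1))))) / 2 =
      1 / √(4 * π * (u2 - u1)) * exp (-(s2 - s1) ^ 2 / (4 * (u2 - u1))) := by
    have ha : 0 < u2 - u1 := sub_pos.mpr hu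
    rw [show 2 / (π * (2 * (u2 - u1))) = 1 / (π * (u2 - u1)) by field_simp,
      show 4 * π * (u2 - u1) = 2 ^ 2 * (π * (u2 - u1)) by ring, sqrt_mul (by positivity),
      sqrt_sq zero_le_two, sqrt_div' _ (by positivity), sqrt_one]
    field_simp
    ring_nf
  refine ⟨hbounds, ?_⟩
  rw [← hval]
  refine (h.div_const 2).congr' ?_
  filter_upwards [hbounds] with t ht
  rw [show xPos u2 s2 t - xPos u1 s1 t = -(((xPos u1 s1 t - xPos u2 s2 t - 1).toNat : ℤ) + 1) by
      rw [Int.toNat_of_nonneg (ht.1.trans ht.2)]; ring,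
    zpow_neg, zpow_add_one₀ two_ne_zero, zpow_natCast]
  field_simp
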